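/- arXiv:1805.09087 — 3 statements merged into one kernel-verified Lean document; each statement's English description precedes it below -/
import Mathlib

section
/- Let z be a point of the hyperbolic upper half-plane ℍ, written in polar coordinates as z = r·e^{iθ} with r > 0 and θ ∈ (0, π). Then the hyperbolic distance from z to the positive imaginary axis iℝ⁺ equals ln(csc θ + |cot θ|). -/
/-! From `z` to a point `it` of the imaginary axis, `cosh d = (|z|² + t²) / (2 t Im z)`. By AM-GM this
is smallest at `t = |z|`, where it equals `|z| / Im z`; for `z = r e^{iθ}` that is `csc θ`, and
`arcosh (csc θ) = ln (csc θ + |cot θ|)`. -/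

open UpperHalfPlane Complex

/-- The positive imaginary axis `iℝ⁺ = {i·t : t > 0}` viewed as a subset of the
upper half-plane `ℍ` (which carries the hyperbolic metric in Mathlib). -/
def posImAxis : Set UpperHalfPlane := {w | ∃ t : ℝ, 0 < t ∧ (w : ℂ) = t * Complex.I}

namespace UpperHalfPlane

lemma mem_posImAxis_iff {w : ℍ} : w ∈ posImAxis ↔ w.re = 0 := by
  constructor
  · rintro ⟨t, -, hw⟩
    simp [UpperHalfPlane.re, hw]
  · intro hw
    refine ⟨w.im, w.im_pos, Complex.ext ?_ ?_⟩ <;> simp [hw]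

lemma cosh_dist_of_re_eq_zero (z : ℍ) {w : ℍ} (hw : w.re = 0) :
    Real.cosh (dist z w) = (‖(z : ℂ)‖ ^ 2 + w.im ^ 2) / (2 * z.im * w.im) := by
  rw [cosh_dist', hw, Complex.sq_norm, Complex.normSq_apply]
  simp only [sub_zero, coe_re, coe_im]
  ring

lemma norm_div_im_le_cosh_dist_of_re_eq_zero (z : ℍ) {w : ℍ} (hw : w.re = 0) :
    ‖(z : ℂ)‖ / z.im ≤ Real.cosh (dist z w) := by
  have hz := z.im_pos
  have hw' := w.im_pos
  rw [cosh_dist_of_re_eq_zero z hw, div_le_div_iff₀ hz (by positivity)]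
  nlinarith [sq_nonneg (‖(z : ℂ)‖ - w.im)]

noncomputable def imAxisProj (z : ℍ) : ℍ :=
  ⟨⟨0, ‖(z : ℂ)‖⟩, norm_pos_iff.mpr z.ne_zero⟩

lemma imAxisProj_mem_posImAxis (z : ℍ) : imAxisProj z ∈ posImAxis :=
  mem_posImAxis_iff.mpr rfl

lemma cosh_dist_imAxisProj (z : ℍ) : Real.cosh (dist z (imAxisProj z)) = ‖(z : ℂ)‖ / z.im := by
  have hz := z.im_pos
  have hn : 0 < ‖(z : ℂ)‖ := norm_pos_iff.mpr z.ne_zero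
  rw [cosh_dist_of_re_eq_zero z rfl]
  change (‖(z : ℂ)‖ ^ 2 + ‖(z : ℂ)‖ ^ 2) / (2 * z.im * ‖(z : ℂ)‖) = _
  field_simp
  ring

lemma infDist_posImAxis_eq_dist_imAxisProj (z : ℍ) :
    Metric.infDist z posImAxis = dist z (imAxisProj z) := by
  refine le_antisymm (Metric.infDist_le_dist_of_mem (imAxisProj_mem_posImAxis z)) ?_
  refine (Metric.le_infDist ⟨_, imAxisProj_mem_posImAxis z⟩).mpr fun w hw ↦ ?_
  have hcosh : Real.cosh (dist z (imAxisProj z)) ≤ Real.cosh (dist z w) :=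
    (cosh_dist_imAxisProj z).trans_le
      (norm_div_im_le_cosh_dist_of_re_eq_zero z (mem_posImAxis_iff.mp hw))
  simpa only [abs_of_nonneg dist_nonneg] using Real.cosh_le_cosh.mp hcosh

lemma infDist_posImAxis (z : ℍ) :
    Metric.infDist z posImAxis = Real.arcosh (‖(z : ℂ)‖ / z.im) := by
  rw [← cosh_dist_imAxisProj, Real.arcosh_cosh dist_nonneg, infDist_posImAxis_eq_dist_imAxisProj]

end UpperHalfPlane

lemma Real.arcosh_one_div_sin {θ : ℝ} (hθ : 0 < Real.sin θ) :
    Real.arcosh (1 / Real.sin θ) = Real.log (1 / Real.sin θ + |Real.cos θ / Real.sin θ|) := by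
  have hcot : (1 / Real.sin θ) ^ 2 - 1 = (Real.cos θ / Real.sin θ) ^ 2 := by
    field_simp
    linarith [Real.sin_sq_add_cos_sq θ]
  rw [Real.arcosh, hcot, Real.sqrt_sq_eq_abs]

theorem dist_to_imaginary_axis_general (z : UpperHalfPlane) (r θ : ℝ) (hr : 0 < r)
    (hz : (z : ℂ) = (r : ℂ) * Complex.exp (θ * Complex.I)) :
    Metric.infDist z posImAxis =
      Real.log (1 / Real.sin θ + |Real.cos θ / Real.sin θ|) := by
  have hnorm : ‖(z : ℂ)‖ = r := by
    rw [hz, norm_mul, Complex.norm_exp_ofReal_mul_I, Complex.norm_real, Real.norm_of_nonneg hr.le,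
      mul_one]
  have him : z.im = r * Real.sin θ := by
    rw [← coe_im, hz, Complex.im_ofReal_mul, Complex.exp_ofReal_mul_I_im]
  have hsin : 0 < Real.sin θ := pos_of_mul_pos_right (him ▸ z.im_pos) hr.le
  rw [infDist_posImAxis, hnorm, him, div_mul_cancel_left₀ hr.ne', ← one_div,
    Real.arcosh_one_div_sin hsin]

/-- If `z ∈ ℍ` is written in polar coordinates as `z = r·e^{iθ}` with `r > 0` and
`θ ∈ (0, π)`, then the hyperbolic distance from `z` to the positive imaginary axis
equals `ln(csc θ + |cot θ|)`. -/
theorem dist_to_imaginary_axis (z : UpperHalfPlane) (r θ : ℝ) (hr : 0 < r)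
    (hθ : θ ∈ Set.Ioo (0 : ℝ) Real.pi)
    (hz : (z : ℂ) = (r : ℂ) * Complex.exp (θ * Complex.I)) :
    Metric.infDist z posImAxis =
      Real.log (1 / Real.sin θ + |Real.cos θ / Real.sin θ|) :=
  dist_to_imaginary_axis_general z r θ hr hz
end

section
/- There exist constants c₁, c₂ > 0 such that for all θ ∈ (0, π), c₁·sin²θ ≤ min(1 − θ·cot θ, 1 + (π − θ)·cot θ) ≤ c₂·sin²θ. (Here 1 + (π−θ)·cot θ = u(π−θ) for u(θ) = 1 − θ·cot θ, so the minimum min{u(θ), u(π−θ)} is comparable to sin²θ on (0,π).) -/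
/-!
Write `u θ = 1 - θ cot θ`, so that the second term of the minimum is `u (π - θ)` and the minimum
is symmetric under `θ ↦ π - θ`. The half-angle bound `θ / 2 ≤ tan (θ / 2)` gives
`θ cot θ ≤ 2 cos θ / (1 + cos θ)` when `cos θ ≥ 0`, hence `u θ ≥ tan² (θ / 2) ≥ sin² θ / 4`;
when `cos θ < 0` already `u θ ≥ 1`. Conversely `sin θ cos θ = sin (2θ) / 2 ≤ θ` gives
`u θ ≤ sin² θ` on `(0, π / 2]`, which bounds the minimum by its term at the angle `≤ π / 2`.
-/

open Real

noncomputable def oneSubMulCot (θ : ℝ) : ℝ := 1 - θ * cot θ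

theorem oneSubMulCot_pi_sub (θ : ℝ) :
    oneSubMulCot (π - θ) = 1 + (π - θ) * (cos θ / sin θ) := by
  rw [oneSubMulCot, cot_eq_cos_div_sin, sin_pi_sub, cos_pi_sub, neg_div, mul_neg, sub_neg_eq_add]

theorem mul_one_add_cos_le_two_sin {θ : ℝ} (h0 : 0 ≤ θ) (hπ : θ < π) :
    θ * (1 + cos θ) ≤ 2 * sin θ := by
  have hcos : 0 < cos (θ / 2) := cos_pos_of_mem_Ioo ⟨by linarith [pi_pos], by linarith⟩
  have hhalf : θ / 2 * cos (θ / 2) ≤ sin (θ / 2) := by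
    have := le_tan (by linarith) (by linarith : θ / 2 < π / 2)
    rwa [tan_eq_sin_div_cos, le_div_iff₀ hcos] at this
  calc θ * (1 + cos θ) = 4 * (θ / 2 * cos (θ / 2)) * cos (θ / 2) := by
        rw [← mul_div_cancel₀ θ two_ne_zero, cos_two_mul]; ring_nf
    _ ≤ 4 * sin (θ / 2) * cos (θ / 2) := by gcongr
    _ = 2 * sin θ := by
        rw [← mul_div_cancel₀ θ two_ne_zero, sin_two_mul]; ring_nf

theorem sin_sq_div_four_le_oneSubMulCot {θ : ℝ} (h0 : 0 < θ) (hπ : θ < π) :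
    sin θ ^ 2 / 4 ≤ oneSubMulCot θ := by
  have hs : 0 < sin θ := sin_pos_of_pos_of_lt_pi h0 hπ
  rw [oneSubMulCot, cot_eq_cos_div_sin]
  rcases le_or_gt 0 (cos θ) with hc | hc
  · have hc1 := cos_le_one θ
    have hcot : θ * (cos θ / sin θ) ≤ 2 * cos θ / (1 + cos θ) := by
      rw [mul_div_assoc', div_le_div_iff₀ hs (by linarith)]
      nlinarith [mul_le_mul_of_nonneg_right (mul_one_add_cos_le_two_sin h0.le hπ) hc]
    calc sin θ ^ 2 / 4 = (1 - cos θ) * (1 + cos θ) / 4 := by rw [sin_sq]; ring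
      _ ≤ (1 - cos θ) / (1 + cos θ) := by
          rw [le_div_iff₀ (by linarith)]
          nlinarith [mul_nonneg (mul_nonneg (sub_nonneg.2 hc1) (sub_nonneg.2 hc1)) (by linarith : 0 ≤ 3 + cos θ)]
      _ = 1 - 2 * cos θ / (1 + cos θ) := by field_simp; ring
      _ ≤ 1 - θ * (cos θ / sin θ) := by linarith
  · have hcot : θ * (cos θ / sin θ) ≤ 0 :=
      mul_nonpos_of_nonneg_of_nonpos h0.le (div_nonpos_of_nonpos_of_nonneg hc.le hs.le)
    nlinarith [sin_sq_le_one θ]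

theorem oneSubMulCot_le_sin_sq {θ : ℝ} (h0 : 0 < θ) (h2 : θ ≤ π / 2) :
    oneSubMulCot θ ≤ sin θ ^ 2 := by
  have hs : 0 < sin θ := sin_pos_of_pos_of_lt_pi h0 (by linarith [pi_pos])
  have hc : 0 ≤ cos θ := cos_nonneg_of_mem_Icc ⟨by linarith [pi_pos], h2⟩
  have hsc : sin θ * cos θ ≤ θ := by
    nlinarith [sin_le (by linarith : 0 ≤ 2 * θ), sin_two_mul θ]
  have hcot : cos θ ^ 2 ≤ θ * (cos θ / sin θ) := by
    rw [mul_div_assoc', le_div_iff₀ hs]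
    nlinarith [mul_le_mul_of_nonneg_right hsc hc]
  rw [oneSubMulCot, cot_eq_cos_div_sin]
  nlinarith [sin_sq_add_cos_sq θ]

/-- `min{u(θ), u(π−θ)}` is comparable to `sin²θ` on `(0, π)`, where
`u(θ) = 1 − θ·cot θ` (so that `u(π−θ) = 1 + (π−θ)·cot θ`). -/
theorem min_u_comparable_sin_sq :
    ∃ c₁ c₂ : ℝ, 0 < c₁ ∧ 0 < c₂ ∧
      ∀ θ ∈ Set.Ioo (0 : ℝ) Real.pi,
        c₁ * Real.sin θ ^ 2 ≤
            min (1 - θ * (Real.cos θ / Real.sin θ))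
              (1 + (Real.pi - θ) * (Real.cos θ / Real.sin θ)) ∧
          min (1 - θ * (Real.cos θ / Real.sin θ))
              (1 + (Real.pi - θ) * (Real.cos θ / Real.sin θ)) ≤
            c₂ * Real.sin θ ^ 2 := by
  refine ⟨1 / 4, 1, by norm_num, one_pos, fun θ ⟨h0, hπ⟩ => ?_⟩
  have hu : 1 - θ * (cos θ / sin θ) = oneSubMulCot θ := by rw [oneSubMulCot, cot_eq_cos_div_sin]
  rw [hu, ← oneSubMulCot_pi_sub]
  have hlow := sin_sq_div_four_le_oneSubMulCot (θ := π - θ) (by linarith) (by linarith)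
  rw [sin_pi_sub] at hlow
  refine ⟨le_min ?_ (by linarith), ?_⟩
  · linarith [sin_sq_div_four_le_oneSubMulCot h0 hπ]
  · rcases le_total θ (π / 2) with h2 | h2
    · exact min_le_of_left_le (by linarith [oneSubMulCot_le_sin_sq h0 h2])
    · have hup := oneSubMulCot_le_sin_sq (θ := π - θ) (by linarith) (by linarith)
      rw [sin_pi_sub] at hup
      exact min_le_of_right_le (by linarith)
end

section
/- Let s > 0, let m ≥ 1, and let f₁, …, f_m : (−ε, s+ε) → ℝ be real-analytic functions on an open interval containing [0, s]. Then there exist a positive integer k, a partition 0 = t₀ < t₁ < ⋯ < t_{k−1} < t_k = s of [0, s], and indices α₀, …, α_{k−1} ∈ {1, …, m} such that: (1) α_i ≠ α_{i+1} for all 0 ≤ i ≤ k−2, and (2) for every 0 ≤ i ≤ k−1 and every t ∈ [t_i, t_{i+1}], f_{α_i}(t) = min_{1 ≤ j ≤ m} f_j(t). In particular, the pointwise minimum of finitely many real-analytic functions on [0, s] is piecewise real-analytic, agreeing with a single one of the functions on each subinterval of a finite partition. -/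
/-!
Two real-analytic functions on a connected open interval either agree identically or, by the
identity theorem, coincide at only finitely many points of the compact interval `[0, s]`.
Cut `[0, s]` at all these coincidence points. On each piece no two different functions cross, so
by the intermediate value theorem a function that is minimal at one interior point is minimal on
the whole piece. Building the partition from left to right, a piece whose minimiser is that of
the previous piece is merged into it, so consecutive labels differ.
-/

open Set Finset

theorem AnalyticOnNhd.eqOn_or_finite_setOf_eq_of_isCompact {𝕜 E : Type*}
    [NontriviallyNormedField 𝕜] [NormedAddCommGroup E] [NormedSpace 𝕜 E] {f g : 𝕜 → E}
    {U K : Set 𝕜} (hf : AnalyticOnNhd 𝕜 f U) (hg : AnalyticOnNhd 𝕜 g U) (hU : IsPreconnected U)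
    (hK : IsCompact K) (hKU : K ⊆ U) :
    EqOn f g U ∨ {x ∈ K | f x = g x}.Finite :=
  (hf.eqOn_or_eventually_ne_of_preconnected hg hU).imp_right fun h =>
    (hK.finite_sdiff_of_mem_codiscreteWithin (Filter.codiscreteWithin_mono hKU h)).subset
      fun _ hx => ⟨hx.1, not_not_intro hx.2⟩

section Crossing

variable {X Y : Type*} [ConditionallyCompleteLinearOrder X] [DenselyOrdered X]
  [TopologicalSpace X] [OrderTopology X] [LinearOrder Y] [TopologicalSpace Y]
  [OrderClosedTopology Y] {a b x₀ : X}

theorem le_on_Icc_of_ne_on_Ioo {f g : X → Y} (hab : a < b) (hf : ContinuousOn f (Icc a b))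
    (hg : ContinuousOn g (Icc a b)) (hne : ∀ x ∈ Ioo a b, f x ≠ g x) (hx₀ : x₀ ∈ Ioo a b)
    (h₀ : f x₀ ≤ g x₀) : ∀ x ∈ Icc a b, f x ≤ g x := by
  have hIoo : ∀ x ∈ Ioo a b, f x ≤ g x := fun x hx => le_of_not_gt fun hlt => by
    obtain ⟨y, hy, hfg⟩ := isPreconnected_Ioo.intermediate_value₂ hx₀ hx
      (hf.mono Ioo_subset_Icc_self) (hg.mono Ioo_subset_Icc_self) h₀ hlt.le
    exact hne y hy hfg
  rw [← closure_Ioo hab.ne] at hf hg ⊢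
  exact le_on_closure hIoo hf hg

theorem exists_eqOn_inf'_of_eqOn_or_ne {ι : Type*} [Fintype ι] (hι : (univ : Finset ι).Nonempty)
    {g : ι → X → Y} (hab : a < b) (hg : ∀ i, ContinuousOn (g i) (Icc a b))
    (hcross : ∀ i j, EqOn (g i) (g j) (Icc a b) ∨ ∀ x ∈ Ioo a b, g i x ≠ g j x) :
    ∃ j, EqOn (g j) (fun x => univ.inf' hι fun i => g i x) (Icc a b) := by
  obtain ⟨x₀, hx₀⟩ := exists_between hab
  obtain ⟨j, -, hj⟩ := univ.exists_min_image (fun i => g i x₀) hι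
  have hmin : ∀ i, ∀ x ∈ Icc a b, g j x ≤ g i x := fun i x hx =>
    (hcross j i).elim (fun h => (h hx).le)
      fun hne => le_on_Icc_of_ne_on_Ioo hab (hg j) (hg i) hne hx₀ (hj i (mem_univ i)) x hx
  exact ⟨j, fun x hx => le_antisymm (le_inf' _ _ fun i _ => hmin i x hx) (inf'_le _ (mem_univ j))⟩

end Crossing

section Partition

variable {ι X Y : Type*} [LinearOrder X] {g : ι → X → Y} {M : X → Y} {a b c : X} {j : ι}

def IsPiecewiseSelection (g : ι → X → Y) (M : X → Y) (a b : X) (k : ℕ) (t : ℕ → X)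
    (α : ℕ → ι) : Prop :=
  0 < k ∧ t 0 = a ∧ t k = b ∧ (∀ i, i + 1 ≤ k → t i < t (i + 1)) ∧
    (∀ i, i + 1 < k → α i ≠ α (i + 1)) ∧ ∀ i < k, EqOn (g (α i)) M (Icc (t i) (t (i + 1)))

theorem isPiecewiseSelection_one (hab : a < b) (hj : EqOn (g j) M (Icc a b)) :
    IsPiecewiseSelection g M a b 1 (fun i => if i = 0 then a else b) fun _ => j := by
  refine ⟨one_pos, rfl, rfl, fun i hi => ?_, fun i hi => by omega, fun i hi => ?_⟩ <;>
    obtain rfl : i = 0 := by omega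
  exacts [hab, hj]

theorem IsPiecewiseSelection.extend {k : ℕ} {t : ℕ → X} {α : ℕ → ι}
    (h : IsPiecewiseSelection g M a b k t α) (hbc : b < c) (hj : EqOn (g j) M (Icc b c)) :
    ∃ k' t' α', IsPiecewiseSelection g M a c k' t' α' := by
  obtain ⟨hk, h0, hkb, hlt, hne, heq⟩ := h
  by_cases hlast : α (k - 1) = j
  · refine ⟨k, fun i => if i < k then t i else c, α, hk, by simp [hk, h0], by simp,
      fun i hi => ?_, hne, fun i hi => ?_⟩
    · rcases (show i + 1 < k ∨ i + 1 = k by omega) with hi' | rfl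
      · simpa [hi', show i < k by omega] using hlt i hi
      · simpa [hkb] using (hlt i hi).trans_le hkb.le |>.trans hbc
    · rcases (show i + 1 < k ∨ i + 1 = k by omega) with hi' | rfl
      · simpa [hi', hi] using heq i hi
      · simp only [Nat.lt_add_one, if_true, lt_irrefl, if_false]
        rw [← Icc_union_Icc_eq_Icc (hlt i le_rfl).le (hkb ▸ hbc.le)]
        refine (heq i hi).union ?_
        simpa [← hlast, hkb] using hj
  · refine ⟨k + 1, fun i => if i ≤ k then t i else c, fun i => if i < k then α i else j,
      k.succ_pos, by simp [h0], by simp, fun i hi => ?_, fun i hi => ?_, fun i hi => ?_⟩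
    · rcases (show i + 1 ≤ k ∨ i = k by omega) with hi' | rfl
      · simpa [hi', show i ≤ k by omega] using hlt i hi'
      · simpa [hkb] using hbc
    · rcases (show i + 1 < k ∨ i + 1 = k by omega) with hi' | rfl
      · simpa [hi', show i < k by omega] using hne i hi'
      · simpa using hlast
    · rcases (show i < k ∨ i = k by omega) with hi' | rfl
      · simpa [hi', show i ≤ k by omega, show i + 1 ≤ k by omega] using heq i hi'
      · simpa [hkb] using hj

theorem exists_isPiecewiseSelection_of_finset (F : Finset X) (hab : a < b)
    (hgap : ∀ c d, a ≤ c → c < d → d ≤ b → (∀ x ∈ F, x ∉ Ioo c d) →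
      ∃ j, EqOn (g j) M (Icc c d)) :
    ∃ k t α, IsPiecewiseSelection g M a b k t α := by
  classical
  -- the largest cut point `p`, if it lies in `(a, b)`, splits off the last piece `[p, b]`
  induction F using Finset.induction_on_max generalizing b with
  | empty =>
    obtain ⟨j, hj⟩ := hgap a b le_rfl hab le_rfl (by simp)
    exact ⟨1, _, _, isPiecewiseSelection_one hab hj⟩
  | insert p F hpF ih =>
    by_cases hp : p ∈ Ioo a b
    · obtain ⟨k, t, α, h⟩ := ih hp.1 fun c d hac hcd hdp hF =>
        hgap c d hac hcd (hdp.trans hp.2.le) <|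
          (forall_mem_insert _ _ _).2 ⟨fun hpc => (hpc.2.trans_le hdp).false, hF⟩
      obtain ⟨j, hj⟩ := hgap p b hp.1.le hp.2 le_rfl <| (forall_mem_insert _ _ _).2
        ⟨fun hpp => hpp.1.false, fun x hx hpx => (hpF x hx).not_gt hpx.1⟩
      exact h.extend hp.2 hj
    · exact ih hab fun c d hac hcd hdb hF => hgap c d hac hcd hdb <| (forall_mem_insert _ _ _).2
        ⟨fun hpc => hp ⟨hac.trans_lt hpc.1, hpc.2.trans_le hdb⟩, hF⟩

end Partition

/-- The pointwise minimum of finitely many real-analytic functions on `[0, s]` is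
piecewise real-analytic: there are a finite partition `0 = t₀ < t₁ < ⋯ < t_k = s`
and indices `α₀, …, α_{k−1}` with `α_i ≠ α_{i+1}`, such that on each `[t_i, t_{i+1}]`
the minimum equals `f_{α_i}`. -/
theorem min_of_analytic_piecewise_analytic (s ε : ℝ) (hs : 0 < s) (hε : 0 < ε)
    (m : ℕ) (hm : 1 ≤ m) (f : Fin m → ℝ → ℝ)
    (hf : ∀ j : Fin m, AnalyticOn ℝ (f j) (Set.Ioo (-ε) (s + ε))) :
    ∃ (k : ℕ) (t : ℕ → ℝ) (α : ℕ → Fin m),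
      0 < k ∧ t 0 = 0 ∧ t k = s ∧
      (∀ i : ℕ, i + 1 ≤ k → t i < t (i + 1)) ∧
      (∀ i : ℕ, i + 1 < k → α i ≠ α (i + 1)) ∧
      (∀ i : ℕ, i < k → ∀ x ∈ Set.Icc (t i) (t (i + 1)),
        f (α i) x =
          Finset.univ.inf' ⟨⟨0, hm⟩, Finset.mem_univ _⟩ fun j : Fin m => f j x) := by
  set U := Ioo (-ε) (s + ε)
  have hfU : ∀ j, AnalyticOnNhd ℝ (f j) U := fun j =>
    isOpen_Ioo.analyticOn_iff_analyticOnNhd.1 (hf j)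
  have hKU : Icc 0 s ⊆ U := Icc_subset_Ioo (by linarith) (by linarith)
  set Z := ⋃ (i) (j) (_ : ¬EqOn (f i) (f j) U), {x ∈ Icc 0 s | f i x = f j x}
  have hZ : Z.Finite := finite_iUnion fun i => finite_iUnion fun j => finite_iUnion fun hij =>
    ((hfU i).eqOn_or_finite_setOf_eq_of_isCompact (hfU j) isPreconnected_Ioo isCompact_Icc
      hKU).resolve_left hij
  refine exists_isPiecewiseSelection_of_finset hZ.toFinset hs fun c d hc hcd hd hZcd => ?_
  have hcdK : Icc c d ⊆ Icc 0 s := Icc_subset_Icc hc hd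
  have hcdU : Icc c d ⊆ U := hcdK.trans hKU
  refine exists_eqOn_inf'_of_eqOn_or_ne _ hcd (fun i => (hfU i).continuousOn.mono hcdU)
    fun i j => ?_
  by_cases hij : EqOn (f i) (f j) U
  · exact .inl (hij.mono hcdU)
  · refine .inr fun x hx hfx => hZcd x (hZ.mem_toFinset.2 ?_) hx
    exact mem_iUnion₂.2 ⟨i, j, mem_iUnion.2 ⟨hij, hcdK (Ioo_subset_Icc_self hx), hfx⟩⟩
end
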